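/- Let α be a type of atoms, let P be a ground program over α in which every rule has a finite positive body, and let F ⊆ F' ⊆ α be two sets of atoms (facts); let F̂ denote the set of fact rules {a. : a ∈ F}. Let Inst^∞(P,F') denote the least fixpoint of the monotone operator R ↦ Inst(P, Heads(R) ∪ F') on subsets of P, where Inst(P, S) = {r ∈ P : B⁺(r) ⊆ S}. Then AS(Inst^∞(P,F') ∪ F̂) = AS(P ∪ F̂), i.e., the overgrounded program computed with the larger set of facts F', together with the facts F, has the same answer sets as the full ground program with the facts F. -/

import Mathlib

structure GroundRule (α : Type*) where
  head : Set α
  posBody : Set α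
  negBody : Set α

namespace GroundRule

variable {α : Type*}

/-- `Heads R` is the set of all head atoms of rules in `R`. -/
def Heads (R : Set (GroundRule α)) : Set α := ⋃ r ∈ R, r.head

/-- `R` body-embeds `r` (written `R ⊢_b r`). -/
def BodyEmbeds (R : Set (GroundRule α)) (r : GroundRule α) : Prop :=
  ∀ a ∈ r.posBody, ∃ r' ∈ R, a ∈ r'.head

/-- `R` embeds `r` (written `R ⊢ r`): either `R` does not body-embed `r`,
or `R` head-embeds `r` (i.e. `r ∈ R`). -/
def Embeds (R : Set (GroundRule α)) (r : GroundRule α) : Prop :=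
  ¬ BodyEmbeds R r ∨ r ∈ R

/-- `E` is an embedding program for the ground program `G`. -/
def IsEmbeddingProgram (G E : Set (GroundRule α)) : Prop :=
  E ⊆ G ∧ ∀ r ∈ G, Embeds E r

/-- The fact rule `a.` for an atom `a`. -/
def factRule (a : α) : GroundRule α := ⟨{a}, ∅, ∅⟩

/-- `factRules F` is the set of fact rules `{a. : a ∈ F}`. -/
def factRules (F : Set α) : Set (GroundRule α) := factRule '' F

/-- The instantiation operator `Inst(P, S) = {r ∈ P : B⁺(r) ⊆ S}`. -/
def Inst (P : Set (GroundRule α)) (S : Set α) : Set (GroundRule α) :=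
  {r ∈ P | r.posBody ⊆ S}

/-- Interpretation `I` satisfies the body of `r`. -/
def SatBody (I : Set α) (r : GroundRule α) : Prop :=
  r.posBody ⊆ I ∧ r.negBody ∩ I = ∅

/-- Interpretation `I` satisfies the rule `r`. -/
def SatRule (I : Set α) (r : GroundRule α) : Prop :=
  ¬ SatBody I r ∨ (r.head ∩ I).Nonempty

/-- `I` is a model of the ground program `G`. -/
def IsModel (I : Set α) (G : Set (GroundRule α)) : Prop :=
  ∀ r ∈ G, SatRule I r

/-- FLP reduct `G^I = {r ∈ G : I ⊨ B(r)}`. -/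
def reduct (G : Set (GroundRule α)) (I : Set α) : Set (GroundRule α) :=
  {r ∈ G | SatBody I r}

/-- `A` is an answer set of `G`: `A` is a model of `G^A` minimal w.r.t. `⊆`. -/
def IsAnswerSet (G : Set (GroundRule α)) (A : Set α) : Prop :=
  IsModel A (reduct G A) ∧ ∀ B, B ⊂ A → ¬ IsModel B (reduct G A)

/-- `AS G` is the set of all answer sets of `G`. -/
def AS (G : Set (GroundRule α)) : Set (Set α) := {A | IsAnswerSet G A}

theorem Heads_mono {R R' : Set (GroundRule α)} (h : R ⊆ R') : Heads R ⊆ Heads R' := by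
  intro a ha
  simp only [Heads, Set.mem_iUnion, exists_prop] at ha ⊢
  obtain ⟨r, hr, har⟩ := ha
  exact ⟨r, h hr, har⟩

/-- The monotone operator `R ↦ Inst(P, Heads(R) ∪ F)`. -/
def InstOp (P : Set (GroundRule α)) (F : Set α) :
    Set (GroundRule α) →o Set (GroundRule α) where
  toFun R := Inst P (Heads R ∪ F)
  monotone' := fun _ _ h _ hr =>
    ⟨hr.1, hr.2.trans (Set.union_subset_union_left F (Heads_mono h))⟩

/-- `Inst^∞(P, F)`: the least fixpoint of `R ↦ Inst(P, Heads(R) ∪ F)`. -/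
def InstInf (P : Set (GroundRule α)) (F : Set α) : Set (GroundRule α) :=
  OrderHom.lfp (InstOp P F)

end GroundRule

open GroundRule

/-!
An answer set `A` of `G` is contained in every set of atoms `S` that is closed under the rules of
`G` (a rule whose positive body lies in `S` has its head in `S`): otherwise `A ∩ S` would be a
smaller model of the reduct. If `E ⊆ G` is an embedding program for `G`, then `Heads E` is such a
set, so answer sets of either program only see rules whose positive bodies lie in `Heads E`; those
rules of `G` all belong to `E`, hence both reducts have the same models below `A`. Finally
`Inst^∞(P, F') ∪ F̂` is an embedding program for `P ∪ F̂`, because `Inst^∞(P, F')` is a fixpoint of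
`R ↦ Inst(P, Heads R ∪ F')` and `F ⊆ F'`.
-/

namespace GroundRule

variable {α : Type*}

@[simp]
theorem mem_Heads {R : Set (GroundRule α)} {a : α} :
    a ∈ Heads R ↔ ∃ r ∈ R, a ∈ r.head := by
  simp [Heads]

theorem head_subset_Heads {R : Set (GroundRule α)} {r : GroundRule α} (hr : r ∈ R) :
    r.head ⊆ Heads R :=
  fun _ ha => mem_Heads.mpr ⟨r, hr, ha⟩

theorem Heads_union (R S : Set (GroundRule α)) : Heads (R ∪ S) = Heads R ∪ Heads S := by
  ext a
  simp [or_and_right, exists_or]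

@[simp]
theorem Heads_factRules (F : Set α) : Heads (factRules F) = F := by
  ext a
  simp [factRules, factRule]

theorem bodyEmbeds_iff {R : Set (GroundRule α)} {r : GroundRule α} :
    BodyEmbeds R r ↔ r.posBody ⊆ Heads R := by
  simp [BodyEmbeds, Set.subset_def]

theorem IsAnswerSet.subset_of_closed {G : Set (GroundRule α)} {A S : Set α}
    (hA : IsAnswerSet G A) (hS : ∀ r ∈ G, r.posBody ⊆ S → r.head ⊆ S) : A ⊆ S := by
  by_contra hAS
  refine hA.2 (A ∩ S) ⟨Set.inter_subset_left, fun hA' => hAS fun a ha => (hA' ha).2⟩ ?_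
  intro r hr
  by_cases hbody : SatBody (A ∩ S) r
  · obtain hns | ⟨a, har, haA⟩ := hA.1 r hr
    · exact absurd hr.2 hns
    · exact Or.inr ⟨a, har, haA, hS r hr.1 (hbody.1.trans Set.inter_subset_right) har⟩
  · exact Or.inl hbody

section EmbeddingProgram

variable {G E : Set (GroundRule α)}

theorem IsEmbeddingProgram.mem_of_posBody_subset (hE : IsEmbeddingProgram G E)
    {r : GroundRule α} (hr : r ∈ G) (hbody : r.posBody ⊆ Heads E) : r ∈ E :=
  (hE.2 r hr).resolve_left (not_not.mpr (bodyEmbeds_iff.mpr hbody))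

theorem IsEmbeddingProgram.head_subset_Heads_of_posBody_subset (hE : IsEmbeddingProgram G E)
    {r : GroundRule α} (hr : r ∈ G) (hbody : r.posBody ⊆ Heads E) : r.head ⊆ Heads E :=
  GroundRule.head_subset_Heads (hE.mem_of_posBody_subset hr hbody)

theorem IsEmbeddingProgram.isModel_reduct_iff (hE : IsEmbeddingProgram G E) {A B : Set α}
    (hA : A ⊆ Heads E) (hBA : B ⊆ A) : IsModel B (reduct E A) ↔ IsModel B (reduct G A) := by
  refine ⟨fun hB r hr => ?_, fun hB r hr => hB r ⟨hE.1 hr.1, hr.2⟩⟩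
  by_cases hbody : SatBody B r
  · exact hB r ⟨hE.mem_of_posBody_subset hr.1 (hbody.1.trans (hBA.trans hA)), hr.2⟩
  · exact Or.inl hbody

theorem IsEmbeddingProgram.AS_eq (hE : IsEmbeddingProgram G E) : AS E = AS G := by
  ext A
  suffices A ⊆ Heads E → (IsAnswerSet E A ↔ IsAnswerSet G A) from
    ⟨fun hA => (this (hA.subset_of_closed fun _ hr _ => head_subset_Heads hr)).mp hA,
      fun hA =>
        (this (hA.subset_of_closed fun _ => hE.head_subset_Heads_of_posBody_subset)).mpr hA⟩
  intro hAE
  refine and_congr (hE.isModel_reduct_iff hAE subset_rfl) (forall_congr' fun B => ?_)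
  exact imp_congr_right fun hBA => not_congr (hE.isModel_reduct_iff hAE hBA.subset)

end EmbeddingProgram

theorem InstInf_eq_Inst (P : Set (GroundRule α)) (F : Set α) :
    InstInf P F = Inst P (Heads (InstInf P F) ∪ F) :=
  (OrderHom.map_lfp (InstOp P F)).symm

theorem InstInf_subset (P : Set (GroundRule α)) (F : Set α) : InstInf P F ⊆ P := by
  rw [InstInf_eq_Inst]
  exact fun _ hr => hr.1

theorem isEmbeddingProgram_InstInf_union_factRules (P : Set (GroundRule α)) {F F' : Set α}
    (h : F ⊆ F') :
    IsEmbeddingProgram (P ∪ factRules F) (InstInf P F' ∪ factRules F) := by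
  refine ⟨Set.union_subset_union_left _ (InstInf_subset P F'), ?_⟩
  rintro r (hrP | hrF)
  · refine or_iff_not_imp_left.mpr fun hbody => Or.inl ?_
    rw [not_not, bodyEmbeds_iff, Heads_union, Heads_factRules] at hbody
    rw [InstInf_eq_Inst]
    exact ⟨hrP, hbody.trans (Set.union_subset_union_right _ h)⟩
  · exact Or.inr (Or.inr hrF)

end GroundRule

theorem overgrounding_equivalence_general {α : Type*} (P : Set (GroundRule α))
    (F F' : Set α) (h : F ⊆ F') :
    AS (InstInf P F' ∪ factRules F) = AS (P ∪ factRules F) :=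
  (isEmbeddingProgram_InstInf_union_factRules P h).AS_eq

/-- for `F ⊆ F'`, the overgrounded program `Inst^∞(P,F')`
together with the fact rules `F̂` has the same answer sets as `P ∪ F̂`. -/
theorem overgrounding_equivalence {α : Type*} (P : Set (GroundRule α))
    (hfin : ∀ r ∈ P, r.posBody.Finite)
    (F F' : Set α) (h : F ⊆ F') :
    AS (InstInf P F' ∪ factRules F) = AS (P ∪ factRules F) :=
  overgrounding_equivalence_general P F F' h
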